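/- For every λ with |λ| ≤ 1 and every η ≥ 0, the cotangent Lie algebras T*r_{3,λ} and T*r'_{3,η} do not carry any symplectic structure. -/

import Mathlib

open LieAlgebra

attribute [local instance 100] LieRing.ofAssociativeRing

noncomputable section

section SD

variable {h V : Type*} [LieRing h] [LieAlgebra ℝ h] [AddCommGroup V] [Module ℝ V]

/-- The underlying type of the semidirect product `h ⋉_π V`. -/
def Sd (_π : h →ₗ⁅ℝ⁆ Module.End ℝ V) : Type _ := h × V

namespace Sd

variable (π : h →ₗ⁅ℝ⁆ Module.End ℝ V)

instance : AddCommGroup (Sd π) := inferInstanceAs (AddCommGroup (h × V))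
instance : Module ℝ (Sd π) := inferInstanceAs (Module ℝ (h × V))

variable {π}

/-- An element of the semidirect product. -/
def mk (x : h) (v : V) : Sd π := (x, v)

def pr1 (p : Sd π) : h := Prod.fst p
def pr2 (p : Sd π) : V := Prod.snd p

@[simp] lemma pr1_mk (x : h) (v : V) : pr1 (mk (π := π) x v) = x := rfl
@[simp] lemma pr2_mk (x : h) (v : V) : pr2 (mk (π := π) x v) = v := rfl
@[simp] lemma mk_add_mk (x y : h) (u v : V) :
    (mk (π := π) x u) + (mk y v) = mk (x + y) (u + v) := rfl
@[simp] lemma smul_mk (t : ℝ) (x : h) (v : V) :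
    t • (mk (π := π) x v) = mk (t • x) (t • v) := rfl
@[simp] lemma neg_mk (x : h) (v : V) : -(mk (π := π) x v) = mk (-x) (-v) := rfl
lemma ext_iff {p q : Sd π} : p = q ↔ pr1 p = pr1 q ∧ pr2 p = pr2 q := Prod.ext_iff
@[simp] lemma mk_inj {x y : h} {u v : V} :
    (mk (π := π) x u) = mk y v ↔ x = y ∧ u = v := Prod.ext_iff
lemma mk_surj (p : Sd π) : ∃ x v, p = mk x v := ⟨pr1 p, pr2 p, rfl⟩

variable (π)

instance : LieRing (Sd π) where
  bracket p q := mk ⁅pr1 p, pr1 q⁆ (π (pr1 p) (pr2 q) - π (pr1 q) (pr2 p))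
  add_lie p q r := by
    obtain ⟨x, u, rfl⟩ := mk_surj p; obtain ⟨y, v, rfl⟩ := mk_surj q
    obtain ⟨z, w, rfl⟩ := mk_surj r
    show mk _ _ = mk _ _ + mk _ _
    simp [add_lie, map_add]
    abel
  lie_add p q r := by
    obtain ⟨x, u, rfl⟩ := mk_surj p; obtain ⟨y, v, rfl⟩ := mk_surj q
    obtain ⟨z, w, rfl⟩ := mk_surj r
    show mk _ _ = mk _ _ + mk _ _
    simp [lie_add, map_add]
    abel
  lie_self p := by
    obtain ⟨x, u, rfl⟩ := mk_surj p
    show mk _ _ = (0 : h × V)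
    simp
    rfl
  leibniz_lie p q r := by
    obtain ⟨x, u, rfl⟩ := mk_surj p; obtain ⟨y, v, rfl⟩ := mk_surj q
    obtain ⟨z, w, rfl⟩ := mk_surj r
    show mk _ _ = mk _ _ + mk _ _
    have hxy : π ⁅x, y⁆ = π x * π y - π y * π x := by
      rw [LieHom.map_lie]; rfl
    have hyz : π ⁅y, z⁆ = π y * π z - π z * π y := by
      rw [LieHom.map_lie]; rfl
    have hxz : π ⁅x, z⁆ = π x * π z - π z * π x := by
      rw [LieHom.map_lie]; rfl
    simp [hxy, hyz, hxz, LinearMap.sub_apply, Module.End.mul_apply, map_sub]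
    abel

instance : LieAlgebra ℝ (Sd π) where
  lie_smul t p q := by
    obtain ⟨x, u, rfl⟩ := mk_surj p; obtain ⟨y, v, rfl⟩ := mk_surj q
    show mk _ _ = t • mk _ _
    simp [smul_sub]

@[simp] lemma lie_mk (x y : h) (u v : V) :
    ⁅(Sd.mk (π := π) x u), (Sd.mk (π := π) y v)⁆ = mk ⁅x, y⁆ (π x v - π y u) := rfl

variable {π}

/-- The copy of `h` inside `h ⋉_π V`. -/
def hPart (π : h →ₗ⁅ℝ⁆ Module.End ℝ V) : Submodule ℝ (Sd π) where
  carrier := {p | pr2 p = 0}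
  add_mem' := by
    rintro p q hp hq
    obtain ⟨x, u, rfl⟩ := mk_surj p; obtain ⟨y, v, rfl⟩ := mk_surj q
    simp_all [Set.mem_setOf_eq]
  zero_mem' := rfl
  smul_mem' := by
    rintro t p hp
    obtain ⟨x, u, rfl⟩ := mk_surj p
    simp_all [Set.mem_setOf_eq]

/-- The copy of `V` inside `h ⋉_π V`. -/
def vPart (π : h →ₗ⁅ℝ⁆ Module.End ℝ V) : Submodule ℝ (Sd π) where
  carrier := {p | pr1 p = 0}
  add_mem' := by
    rintro p q hp hq
    obtain ⟨x, u, rfl⟩ := mk_surj p; obtain ⟨y, v, rfl⟩ := mk_surj q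
    simp_all [Set.mem_setOf_eq]
  zero_mem' := rfl
  smul_mem' := by
    rintro t p hp
    obtain ⟨x, u, rfl⟩ := mk_surj p
    simp_all [Set.mem_setOf_eq]

end Sd

end SD

section Cpx

variable {g : Type*} [LieRing g] [LieAlgebra ℝ g]

/-- A complex structure on a real Lie algebra: `J² = -I` and the Nijenhuis tensor of `J`
vanishes. -/
def IsCpxStruct (J : g →ₗ[ℝ] g) : Prop :=
  (∀ x, J (J x) = -x) ∧
  ∀ x y : g, ⁅J x, J y⁆ - ⁅x, y⁆ - J ⁅J x, y⁆ - J ⁅x, J y⁆ = 0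

/-- An abelian complex structure. -/
def IsAbelianCpx (J : g →ₗ[ℝ] g) : Prop := ∀ x y : g, ⁅J x, J y⁆ = ⁅x, y⁆

/-- A bi-invariant complex structure. -/
def IsBiinvariant (J : g →ₗ[ℝ] g) : Prop := ∀ x y : g, J ⁅x, y⁆ = ⁅x, J y⁆

/-- A totally real (almost) complex structure on a semidirect product: `J h = V`. -/
def IsTotallyReal {h V : Type*} [LieRing h] [LieAlgebra ℝ h] [AddCommGroup V] [Module ℝ V]
    (π : h →ₗ⁅ℝ⁆ Module.End ℝ V) (J : Sd π →ₗ[ℝ] Sd π) : Prop :=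
  (Sd.hPart π).map J = Sd.vPart π

end Cpx


section DualRep

variable {h V : Type*} [LieRing h] [LieAlgebra ℝ h] [AddCommGroup V] [Module ℝ V]

/-- The dual representation `π*` of a representation `π`, `(π*(x)a)(u) = -a(π(x)u)`. -/
def dualRep (π : h →ₗ⁅ℝ⁆ Module.End ℝ V) : h →ₗ⁅ℝ⁆ Module.End ℝ (Module.Dual ℝ V) where
  toFun x := -(π x).dualMap
  map_add' x y := by ext φ v; simp [map_add]; abel
  map_smul' t x := by ext φ v; simp
  map_lie' {x y} := by
    ext φ v
    have : π ⁅x, y⁆ = π x * π y - π y * π x := by rw [LieHom.map_lie]; rfl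
    simp [Ring.lie_def, Module.End.mul_apply, this, LinearMap.sub_apply]

@[simp] lemma dualRep_apply (π : h →ₗ⁅ℝ⁆ Module.End ℝ V) (x : h) (φ : Module.Dual ℝ V)
    (v : V) : dualRep π x φ v = -φ (π x v) := rfl

end DualRep

section TanCot

variable (h : Type*) [LieRing h] [LieAlgebra ℝ h]

/-- The coadjoint representation of `h` on `h*`. -/
abbrev coadRep : h →ₗ⁅ℝ⁆ Module.End ℝ (Module.Dual ℝ h) := dualRep (LieAlgebra.ad ℝ h)

/-- The tangent Lie algebra `T h = h ⋉_ad h`. -/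
abbrev TangentAlg := Sd (LieAlgebra.ad ℝ h)

/-- The cotangent Lie algebra `T*h = h ⋉_ad* h*`. -/
abbrev CotangentAlg := Sd (coadRep h)

/-- The canonical neutral metric on the cotangent Lie algebra `T*h`:
`⟨(x,φ),(y,ψ)⟩ = ψ(x) + φ(y)`. -/
def canMetric (p q : CotangentAlg h) : ℝ := Sd.pr2 p (Sd.pr1 q) + Sd.pr2 q (Sd.pr1 p)

end TanCot

section MorePreds

variable {g : Type*} [LieRing g] [LieAlgebra ℝ g]

/-- A derivation of a Lie algebra. -/
def IsDer (d : g →ₗ[ℝ] g) : Prop := ∀ x y : g, d ⁅x, y⁆ = ⁅d x, y⁆ + ⁅x, d y⁆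

/-- The ascending series `a_l(J)` associated to an almost complex structure `J`. -/
def aSer (J : g →ₗ[ℝ] g) : ℕ → Set g
  | 0 => {0}
  | l + 1 => {x | (∀ y : g, ⁅x, y⁆ ∈ aSer J l) ∧ ∀ y : g, ⁅J x, y⁆ ∈ aSer J l}

/-- A nilpotent (almost) complex structure: `a_t(J) = g` for some `t`. -/
def IsNilpotentCpx (J : g →ₗ[ℝ] g) : Prop := ∃ t, aSer J t = Set.univ

/-- An `r`-step nilpotent (almost) complex structure. -/
def IsNilpotentStepCpx (J : g →ₗ[ℝ] g) (r : ℕ) : Prop :=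
  aSer J r = Set.univ ∧ ∀ s < r, aSer J s ≠ Set.univ

/-- A symplectic structure on a Lie algebra, as a bilinear, alternating, nondegenerate,
closed 2-form. -/
def IsSymplForm (ω : g → g → ℝ) : Prop :=
  (∀ x : g, IsLinearMap ℝ (ω x)) ∧ (∀ y : g, IsLinearMap ℝ (fun x => ω x y)) ∧
  (∀ x : g, ω x x = 0) ∧ (∀ x : g, (∀ y : g, ω x y = 0) → x = 0) ∧
  ∀ x y z : g, ω ⁅x, y⁆ z + ω ⁅y, z⁆ x + ω ⁅z, x⁆ y = 0

/-- A Kähler structure: a compatible pair of a complex structure and a symplectic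
structure. -/
def IsKahlerPair (J : g →ₗ[ℝ] g) (ω : g → g → ℝ) : Prop :=
  IsCpxStruct J ∧ IsSymplForm ω ∧ ∀ x y : g, ω (J x) (J y) = ω x y

end MorePreds

section LagSympl

variable {h V : Type*} [LieRing h] [LieAlgebra ℝ h] [AddCommGroup V] [Module ℝ V]

/-- A lagrangian symplectic structure on a semidirect product `h ⋉_π V`: both `h` and `V`
are totally isotropic. -/
def IsLagrangianSympl (π : h →ₗ⁅ℝ⁆ Module.End ℝ V) (ω : Sd π → Sd π → ℝ) : Prop :=
  IsSymplForm ω ∧ (∀ x y : h, ω (Sd.mk x 0) (Sd.mk y 0) = 0) ∧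
    ∀ u v : V, ω (Sd.mk 0 u) (Sd.mk 0 v) = 0

end LagSympl

section Solv3

/-- A `2 × 2` real matrix as an endomorphism of `ℝ²`. -/
def endOf (a b c d : ℝ) : Module.End ℝ (Fin 2 → ℝ) where
  toFun v := ![a * v 0 + b * v 1, c * v 0 + d * v 1]
  map_add' u v := by
    funext i; fin_cases i <;> simp [Matrix.cons_val_zero, Matrix.cons_val_one] <;> ring
  map_smul' t v := by
    funext i; fin_cases i <;> simp [Matrix.cons_val_zero, Matrix.cons_val_one] <;> ring

/-- The representation of the abelian Lie algebra `ℝ` on `ℝ²` sending `t` to `t • A`. -/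
def rep2 (A : Module.End ℝ (Fin 2 → ℝ)) : ℝ →ₗ⁅ℝ⁆ Module.End ℝ (Fin 2 → ℝ) where
  toFun t := t • A
  map_add' s t := by simp [add_smul]
  map_smul' s t := by simp [mul_smul]
  map_lie' {s t} := by
    ext v
    simp [Ring.lie_def, Module.End.mul_apply, smul_smul, mul_comm]

/-- The solvable Lie algebra `ℝ ⋉_A ℝ²` determined by a `2 × 2` matrix `A`. -/
abbrev Solv3 (A : Module.End ℝ (Fin 2 → ℝ)) := Sd (rep2 A)

/-- The 3-dimensional Heisenberg Lie algebra `h1`: `[e1,e2] = e3`. -/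
abbrev H1 := Solv3 (endOf 0 0 1 0)

/-- The Lie algebra `r3`: `[e1,e2] = e2`, `[e1,e3] = e2 + e3`. -/
abbrev R3 := Solv3 (endOf 1 1 0 1)

/-- The Lie algebra `r_{3,λ}`: `[e1,e2] = e2`, `[e1,e3] = λ e3`. -/
abbrev R3l (lam : ℝ) := Solv3 (endOf 1 0 0 lam)

/-- The Lie algebra `r'_{3,η}`: `[e1,e2] = ηe2 - e3`, `[e1,e3] = e2 + ηe3`. -/
abbrev R3e' (eta : ℝ) := Solv3 (endOf eta 1 (-1) eta)

namespace Solv3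

variable (A : Module.End ℝ (Fin 2 → ℝ))

/-- The basis vector `e1` of `ℝ ⋉_A ℝ²`. -/
def E1 : Solv3 A := Sd.mk 1 0
/-- The basis vector `e2` of `ℝ ⋉_A ℝ²`. -/
def E2 : Solv3 A := Sd.mk 0 ![1, 0]
/-- The basis vector `e3` of `ℝ ⋉_A ℝ²`. -/
def E3 : Solv3 A := Sd.mk 0 ![0, 1]

/-- The dual basis vector `e1* ∈ (ℝ ⋉_A ℝ²)*`. -/
def D1 : Module.Dual ℝ (Solv3 A) := LinearMap.fst ℝ ℝ (Fin 2 → ℝ)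
/-- The dual basis vector `e2* ∈ (ℝ ⋉_A ℝ²)*`. -/
def D2 : Module.Dual ℝ (Solv3 A) :=
  (LinearMap.proj 0).comp (LinearMap.snd ℝ ℝ (Fin 2 → ℝ))
/-- The dual basis vector `e3* ∈ (ℝ ⋉_A ℝ²)*`. -/
def D3 : Module.Dual ℝ (Solv3 A) :=
  (LinearMap.proj 1).comp (LinearMap.snd ℝ ℝ (Fin 2 → ℝ))

end Solv3

end Solv3

section Simple3



/-- Structure-constant bracket of a concrete copy of `sl(2,ℝ)`. -/
def sl2Br (x y : Fin 3 → ℝ) : Fin 3 → ℝ :=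
  ![2 * (x 2 * y 0 - y 2 * x 0), -2 * (x 2 * y 1 - y 2 * x 1), x 0 * y 1 - y 0 * x 1]

/-- Structure-constant bracket of a concrete copy of `so(3)`. -/
def so3Br (x y : Fin 3 → ℝ) : Fin 3 → ℝ :=
  ![-(x 2 * y 1 - y 2 * x 1), x 2 * y 0 - y 2 * x 0, x 0 * y 1 - y 0 * x 1]

/-- Structure-constant bracket of the complex Heisenberg algebra. -/
def ch1Br (x y : Fin 3 → ℂ) : Fin 3 → ℂ := ![0, 0, x 0 * y 1 - y 0 * x 1]

section BrLemmas

lemma sl2Br_add_left (x y z : Fin 3 → ℝ) :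
    sl2Br (x + y) z = sl2Br x z + sl2Br y z := by
  funext i; fin_cases i <;> simp [sl2Br] <;> ring
lemma sl2Br_add_right (x y z : Fin 3 → ℝ) :
    sl2Br x (y + z) = sl2Br x y + sl2Br x z := by
  funext i; fin_cases i <;> simp [sl2Br] <;> ring
lemma sl2Br_self (x : Fin 3 → ℝ) : sl2Br x x = 0 := by
  funext i; fin_cases i <;> simp [sl2Br] <;> ring
lemma sl2Br_leibniz (x y z : Fin 3 → ℝ) :
    sl2Br x (sl2Br y z) = sl2Br (sl2Br x y) z + sl2Br y (sl2Br x z) := by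
  funext i; fin_cases i <;> simp [sl2Br] <;> ring
lemma sl2Br_smul (t : ℝ) (x y : Fin 3 → ℝ) : sl2Br x (t • y) = t • sl2Br x y := by
  funext i; fin_cases i <;> simp [sl2Br] <;> ring

lemma so3Br_add_left (x y z : Fin 3 → ℝ) :
    so3Br (x + y) z = so3Br x z + so3Br y z := by
  funext i; fin_cases i <;> simp [so3Br] <;> ring
lemma so3Br_add_right (x y z : Fin 3 → ℝ) :
    so3Br x (y + z) = so3Br x y + so3Br x z := by
  funext i; fin_cases i <;> simp [so3Br] <;> ring
lemma so3Br_self (x : Fin 3 → ℝ) : so3Br x x = 0 := by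
  funext i; fin_cases i <;> simp [so3Br] <;> ring
lemma so3Br_leibniz (x y z : Fin 3 → ℝ) :
    so3Br x (so3Br y z) = so3Br (so3Br x y) z + so3Br y (so3Br x z) := by
  funext i; fin_cases i <;> simp [so3Br] <;> ring
lemma so3Br_smul (t : ℝ) (x y : Fin 3 → ℝ) : so3Br x (t • y) = t • so3Br x y := by
  funext i; fin_cases i <;> simp [so3Br] <;> ring

lemma ch1Br_add_left (x y z : Fin 3 → ℂ) :
    ch1Br (x + y) z = ch1Br x z + ch1Br y z := by
  funext i; fin_cases i <;> simp [ch1Br] <;> ring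
lemma ch1Br_add_right (x y z : Fin 3 → ℂ) :
    ch1Br x (y + z) = ch1Br x y + ch1Br x z := by
  funext i; fin_cases i <;> simp [ch1Br] <;> ring
lemma ch1Br_self (x : Fin 3 → ℂ) : ch1Br x x = 0 := by
  funext i; fin_cases i <;> simp [ch1Br] <;> ring
lemma ch1Br_leibniz (x y z : Fin 3 → ℂ) :
    ch1Br x (ch1Br y z) = ch1Br (ch1Br x y) z + ch1Br y (ch1Br x z) := by
  funext i; fin_cases i <;> simp [ch1Br] <;> ring
lemma ch1Br_smul (t : ℝ) (x y : Fin 3 → ℂ) : ch1Br x (t • y) = t • ch1Br x y := by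
  funext i; fin_cases i <;> simp [ch1Br] <;> ring

end BrLemmas

/-- A concrete copy of `sl(2,ℝ)`. -/
def SL2 : Type := Fin 3 → ℝ

namespace SL2
instance : AddCommGroup SL2 := inferInstanceAs (AddCommGroup (Fin 3 → ℝ))
instance : Module ℝ SL2 := inferInstanceAs (Module ℝ (Fin 3 → ℝ))
instance : LieRing SL2 where
  bracket := sl2Br
  add_lie := sl2Br_add_left
  lie_add := sl2Br_add_right
  lie_self := sl2Br_self
  leibniz_lie := sl2Br_leibniz
instance : LieAlgebra ℝ SL2 where
  lie_smul := sl2Br_smul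
def E1 : SL2 := ![1, 0, 0]
def E2 : SL2 := ![0, 1, 0]
def E3 : SL2 := ![0, 0, 1]
end SL2

/-- A concrete copy of `so(3)`. -/
def SO3 : Type := Fin 3 → ℝ

namespace SO3
instance : AddCommGroup SO3 := inferInstanceAs (AddCommGroup (Fin 3 → ℝ))
instance : Module ℝ SO3 := inferInstanceAs (Module ℝ (Fin 3 → ℝ))
instance : LieRing SO3 where
  bracket := so3Br
  add_lie := so3Br_add_left
  lie_add := so3Br_add_right
  lie_self := so3Br_self
  leibniz_lie := so3Br_leibniz
instance : LieAlgebra ℝ SO3 where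
  lie_smul := so3Br_smul
def E1 : SO3 := ![1, 0, 0]
def E2 : SO3 := ![0, 1, 0]
def E3 : SO3 := ![0, 0, 1]
end SO3

/-- The real Lie algebra underlying the complexification `h1 ⊗ ℂ` of the 3-dimensional
Heisenberg Lie algebra. -/
def CH1 : Type := Fin 3 → ℂ

namespace CH1
instance : AddCommGroup CH1 := inferInstanceAs (AddCommGroup (Fin 3 → ℂ))
instance : Module ℝ CH1 := inferInstanceAs (Module ℝ (Fin 3 → ℂ))
instance : LieRing CH1 where
  bracket := ch1Br
  add_lie := ch1Br_add_left
  lie_add := ch1Br_add_right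
  lie_self := ch1Br_self
  leibniz_lie := ch1Br_leibniz
instance : LieAlgebra ℝ CH1 where
  lie_smul := ch1Br_smul
end CH1

end Simple3

end

/-!
For `g = ℝ ⋉_A ℝ²` the dual vector `e₄ = e₁*` vanishes on `[g, g] ⊆ ℝ²`, so it is central in
`T*g`. Closedness of `ω` with a central argument gives `ω(e₄, [x, y]) = 0`, which kills
`ω(e₄, ·)` on the derived algebra; the remaining basis vectors are handled by closedness on triples
whose bracket produces `e₄`, such as `[e₂, e₅] = e₄` in `T*r_{3,λ}`. So the nonzero vector `e₄` lies
in the kernel of `ω`, contradicting nondegeneracy.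
-/

namespace IsSymplForm

variable {g : Type*} [LieRing g] [LieAlgebra ℝ g] {ω : g → g → ℝ}

theorem add_left (hω : IsSymplForm ω) (x y z : g) : ω (x + y) z = ω x z + ω y z :=
  (hω.2.1 z).map_add x y

theorem smul_left (hω : IsSymplForm ω) (t : ℝ) (x z : g) : ω (t • x) z = t * ω x z :=
  (hω.2.1 z).map_smul t x

theorem neg_left (hω : IsSymplForm ω) (x z : g) : ω (-x) z = -ω x z :=
  (hω.2.1 z).map_neg x

theorem add_right (hω : IsSymplForm ω) (x y z : g) : ω x (y + z) = ω x y + ω x z :=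
  (hω.1 x).map_add y z

theorem smul_right (hω : IsSymplForm ω) (t : ℝ) (x z : g) : ω x (t • z) = t * ω x z :=
  (hω.1 x).map_smul t z

theorem neg_right (hω : IsSymplForm ω) (x z : g) : ω x (-z) = -ω x z :=
  (hω.1 x).map_neg z

theorem zero_left (hω : IsSymplForm ω) (z : g) : ω 0 z = 0 :=
  (hω.2.1 z).map_zero

theorem apply_swap (hω : IsSymplForm ω) (x y : g) : ω y x = -ω x y := by
  have h := hω.2.2.1 (x + y)
  rw [hω.add_left, hω.add_right, hω.add_right, hω.2.2.1 x, hω.2.2.1 y] at h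
  linarith

theorem apply_lie (hω : IsSymplForm ω) (x y z : g) :
    ω ⁅x, y⁆ z = ω ⁅x, z⁆ y - ω ⁅y, z⁆ x := by
  have h := hω.2.2.2.2 x y z
  rw [← lie_skew z x, hω.neg_left] at h
  linarith

theorem apply_lie_eq_zero_of_mem_center (hω : IsSymplForm ω) {z : g}
    (hz : z ∈ LieAlgebra.center ℝ g) (x y : g) : ω z ⁅x, y⁆ = 0 := by
  rw [LieModule.mem_maxTrivSubmodule] at hz
  rw [hω.apply_swap, hω.apply_lie, hz, hz, hω.zero_left, hω.zero_left, sub_zero, neg_zero]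

theorem eq_zero_of_apply_eq_zero_of_span_eq_top (hω : IsSymplForm ω) {s : Set g}
    (hs : Submodule.span ℝ s = ⊤) {z : g} (h : ∀ v ∈ s, ω z v = 0) : z = 0 := by
  have hf : IsLinearMap.mk' (ω z) (hω.1 z) = 0 := LinearMap.ext_on hs h
  exact hω.2.2.2.1 z (LinearMap.congr_fun hf)

end IsSymplForm

namespace Sd

variable {h V : Type*} [LieRing h] [LieAlgebra ℝ h] [AddCommGroup V] [Module ℝ V]
  {π : h →ₗ⁅ℝ⁆ Module.End ℝ V}

theorem mk_zero_zero : (mk 0 0 : Sd π) = 0 := rfl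

theorem lie_mk_zero_mk_zero (x y : h) :
    ⁅(mk x 0 : Sd π), (mk y 0 : Sd π)⁆ = mk ⁅x, y⁆ 0 := by
  simp [lie_mk]

theorem lie_mk_zero_zero_mk (x : h) (v : V) :
    ⁅(mk x 0 : Sd π), (mk 0 v : Sd π)⁆ = mk 0 (π x v) := by
  simp [lie_mk]

theorem lie_zero_mk_zero_mk (u v : V) : ⁅(mk 0 u : Sd π), (mk 0 v : Sd π)⁆ = 0 := by
  simp [lie_mk, mk_zero_zero]

end Sd

namespace Solv3

variable (A : Module.End ℝ (Fin 2 → ℝ))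

theorem mk_eq_sum (s : ℝ) (w : Fin 2 → ℝ) :
    (Sd.mk s w : Solv3 A) = s • E1 A + w 0 • E2 A + w 1 • E3 A := by
  simp only [E1, E2, E3, Sd.smul_mk, Sd.mk_add_mk, Sd.mk_inj]
  refine ⟨by simp, funext fun i => ?_⟩
  fin_cases i <;> simp

@[simp] theorem D1_mk (s : ℝ) (w : Fin 2 → ℝ) : D1 A (Sd.mk s w) = s := rfl
@[simp] theorem D2_mk (s : ℝ) (w : Fin 2 → ℝ) : D2 A (Sd.mk s w) = w 0 := rfl
@[simp] theorem D3_mk (s : ℝ) (w : Fin 2 → ℝ) : D3 A (Sd.mk s w) = w 1 := rfl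

theorem dual_eq_sum (φ : Module.Dual ℝ (Solv3 A)) :
    φ = φ (E1 A) • D1 A + φ (E2 A) • D2 A + φ (E3 A) • D3 A := by
  refine LinearMap.ext fun p => ?_
  obtain ⟨s, w, rfl⟩ := Sd.mk_surj p
  conv_lhs => rw [mk_eq_sum A s w]
  simp only [map_add, map_smul, LinearMap.add_apply, LinearMap.smul_apply, D1_mk, D2_mk, D3_mk,
    smul_eq_mul]
  ring

@[simp] theorem rep2_apply (t : ℝ) (w : Fin 2 → ℝ) : rep2 A t w = t • A w := rfl

theorem lie_mk (t s : ℝ) (v w : Fin 2 → ℝ) :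
    ⁅(Sd.mk t v : Solv3 A), (Sd.mk s w : Solv3 A)⁆ = Sd.mk 0 (t • A w - s • A v) := by
  rw [Sd.lie_mk, Ring.lie_def, mul_comm, sub_self]
  rfl

theorem endOf_apply (a b c d : ℝ) (v : Fin 2 → ℝ) :
    endOf a b c d v = ![a * v 0 + b * v 1, c * v 0 + d * v 1] := rfl

theorem D1_lie (x y : Solv3 A) : D1 A ⁅x, y⁆ = 0 := by
  obtain ⟨t, v, rfl⟩ := Sd.mk_surj x
  obtain ⟨s, w, rfl⟩ := Sd.mk_surj y
  rw [lie_mk, D1_mk]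

end Solv3

theorem eq_zero_and_eq_zero_of_rotation {η x y : ℝ} (h₁ : η * x - y = 0) (h₂ : x + η * y = 0) :
    x = 0 ∧ y = 0 := by
  have hη : (1 + η ^ 2) ≠ 0 := by positivity
  refine ⟨(mul_eq_zero.1 ?_).resolve_left hη, (mul_eq_zero.1 ?_).resolve_left hη⟩
  · linear_combination η * h₁ + h₂
  · linear_combination η * h₂ - h₁

namespace CotangentSolv3

open Solv3

variable (A : Module.End ℝ (Fin 2 → ℝ))

def e₁ : CotangentAlg (Solv3 A) := Sd.mk (E1 A) 0
def e₂ : CotangentAlg (Solv3 A) := Sd.mk (E2 A) 0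
def e₃ : CotangentAlg (Solv3 A) := Sd.mk (E3 A) 0
def e₄ : CotangentAlg (Solv3 A) := Sd.mk 0 (D1 A)
def e₅ : CotangentAlg (Solv3 A) := Sd.mk 0 (D2 A)
def e₆ : CotangentAlg (Solv3 A) := Sd.mk 0 (D3 A)

theorem span_eq_top :
    Submodule.span ℝ {e₁ A, e₂ A, e₃ A, e₄ A, e₅ A, e₆ A} = ⊤ := by
  refine eq_top_iff.2 fun p _ => ?_
  obtain ⟨x, φ, rfl⟩ := Sd.mk_surj p
  obtain ⟨s, w, rfl⟩ := Sd.mk_surj x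
  have hp : (Sd.mk (Sd.mk s w) φ : CotangentAlg (Solv3 A)) =
      s • e₁ A + w 0 • e₂ A + w 1 • e₃ A + φ (E1 A) • e₄ A + φ (E2 A) • e₅ A + φ (E3 A) • e₆ A := by
    simp only [e₁, e₂, e₃, e₄, e₅, e₆, Sd.smul_mk, Sd.mk_add_mk, smul_zero, add_zero, zero_add]
    rw [← mk_eq_sum, ← dual_eq_sum]
  rw [hp]
  refine add_mem (add_mem (add_mem (add_mem (add_mem ?_ ?_) ?_) ?_) ?_) ?_ <;>
    exact Submodule.smul_mem _ _ (Submodule.subset_span (by simp))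

theorem e₄_ne_zero : e₄ A ≠ 0 := fun h =>
  one_ne_zero (LinearMap.congr_fun (congrArg Sd.pr2 h) (Sd.mk 1 0) : (1 : ℝ) = 0)

theorem e₄_mem_center : e₄ A ∈ LieAlgebra.center ℝ (CotangentAlg (Solv3 A)) := by
  refine (LieModule.mem_maxTrivSubmodule _ _ _ _).2 fun p => ?_
  obtain ⟨x, φ, rfl⟩ := Sd.mk_surj p
  refine (Sd.lie_mk _ x 0 φ (D1 A)).trans (Sd.mk_inj.2 ⟨lie_zero x, LinearMap.ext fun y => ?_⟩)
  simp [D1_lie]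

section

variable (a b c d : ℝ)

theorem lie_e₁_e₂ : ⁅e₁ (endOf a b c d), e₂ (endOf a b c d)⁆ = a • e₂ _ + c • e₃ _ := by
  rw [e₁, e₂, e₃, Sd.lie_mk_zero_mk_zero, E1, E2, E3, lie_mk]
  simp only [Sd.smul_mk, Sd.mk_add_mk, smul_zero, add_zero, Sd.mk_inj, true_and, and_true]
  ext i
  fin_cases i <;> simp [endOf_apply]

theorem lie_e₁_e₃ : ⁅e₁ (endOf a b c d), e₃ (endOf a b c d)⁆ = b • e₂ _ + d • e₃ _ := by
  rw [e₁, e₂, e₃, Sd.lie_mk_zero_mk_zero, E1, E2, E3, lie_mk]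
  simp only [Sd.smul_mk, Sd.mk_add_mk, smul_zero, add_zero, Sd.mk_inj, true_and, and_true]
  ext i
  fin_cases i <;> simp [endOf_apply]

theorem lie_e₁_e₅ : ⁅e₁ (endOf a b c d), e₅ (endOf a b c d)⁆ = -a • e₅ _ + -b • e₆ _ := by
  rw [e₁, e₅, e₆, Sd.lie_mk_zero_zero_mk]
  simp only [Sd.smul_mk, Sd.mk_add_mk, smul_zero, add_zero, Sd.mk_inj, true_and]
  ext p
  obtain ⟨s, w, rfl⟩ := Sd.mk_surj p
  simp [endOf_apply, E1, add_comm]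

theorem lie_e₁_e₆ : ⁅e₁ (endOf a b c d), e₆ (endOf a b c d)⁆ = -c • e₅ _ + -d • e₆ _ := by
  rw [e₁, e₅, e₆, Sd.lie_mk_zero_zero_mk]
  simp only [Sd.smul_mk, Sd.mk_add_mk, smul_zero, add_zero, Sd.mk_inj, true_and]
  ext p
  obtain ⟨s, w, rfl⟩ := Sd.mk_surj p
  simp [endOf_apply, E1, add_comm]

theorem lie_e₂_e₃ : ⁅e₂ (endOf a b c d), e₃ (endOf a b c d)⁆ = 0 := by
  rw [e₂, e₃, Sd.lie_mk_zero_mk_zero, E2, E3, lie_mk]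
  simp [Sd.mk_zero_zero]

theorem lie_e₂_e₅ : ⁅e₂ (endOf a b c d), e₅ (endOf a b c d)⁆ = a • e₄ _ := by
  rw [e₂, e₄, e₅, Sd.lie_mk_zero_zero_mk]
  simp only [Sd.smul_mk, smul_zero, Sd.mk_inj, true_and]
  ext p
  obtain ⟨s, w, rfl⟩ := Sd.mk_surj p
  simp [endOf_apply, E2, mul_comm]

theorem lie_e₂_e₆ : ⁅e₂ (endOf a b c d), e₆ (endOf a b c d)⁆ = c • e₄ _ := by
  rw [e₂, e₄, e₆, Sd.lie_mk_zero_zero_mk]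
  simp only [Sd.smul_mk, smul_zero, Sd.mk_inj, true_and]
  ext p
  obtain ⟨s, w, rfl⟩ := Sd.mk_surj p
  simp [endOf_apply, E2, mul_comm]

theorem lie_e₃_e₅ : ⁅e₃ (endOf a b c d), e₅ (endOf a b c d)⁆ = b • e₄ _ := by
  rw [e₃, e₄, e₅, Sd.lie_mk_zero_zero_mk]
  simp only [Sd.smul_mk, smul_zero, Sd.mk_inj, true_and]
  ext p
  obtain ⟨s, w, rfl⟩ := Sd.mk_surj p
  simp [endOf_apply, E3, mul_comm]

theorem lie_e₅_e₆ : ⁅e₅ (endOf a b c d), e₆ (endOf a b c d)⁆ = 0 :=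
  Sd.lie_zero_mk_zero_mk _ _

end

theorem apply_e₄_eq_zero_of_r3l {lam : ℝ}
    {ω : CotangentAlg (R3l lam) → CotangentAlg (R3l lam) → ℝ} (hω : IsSymplForm ω) :
    ∀ v ∈ ({e₁ _, e₂ _, e₃ _, e₄ _, e₅ _, e₆ _} : Set (CotangentAlg (R3l lam))),
      ω (e₄ _) v = 0 := by
  have hz := hω.apply_lie_eq_zero_of_mem_center (e₄_mem_center (endOf 1 0 0 lam))
  have h₂ : ω (e₄ _) (e₂ _) = 0 := by simpa [lie_e₁_e₂] using hz (e₁ _) (e₂ _)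
  have h₅ : ω (e₄ _) (e₅ _) = 0 := by simpa [lie_e₁_e₅, hω.neg_right] using hz (e₁ _) (e₅ _)
  have h₁ : ω (e₄ _) (e₁ _) = 0 := by
    have h := hω.apply_lie (e₁ _) (e₂ _) (e₅ _)
    simp only [lie_e₁_e₂, lie_e₁_e₅, lie_e₂_e₅, one_smul, zero_smul, add_zero, neg_smul, neg_zero,
      hω.neg_left] at h
    linarith [hω.apply_swap (e₂ _) (e₅ _)]
  have h₃ : ω (e₄ _) (e₃ _) = 0 := by
    simpa [lie_e₂_e₃, lie_e₂_e₅, lie_e₃_e₅, hω.zero_left, eq_comm] using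
      hω.apply_lie (e₂ _) (e₃ _) (e₅ _)
  have h₆ : ω (e₄ _) (e₆ _) = 0 := by
    simpa [lie_e₂_e₅, lie_e₂_e₆, lie_e₅_e₆, hω.zero_left] using hω.apply_lie (e₂ _) (e₅ _) (e₆ _)
  rintro v (rfl | rfl | rfl | rfl | rfl | rfl)
  exacts [h₁, h₂, h₃, hω.2.2.1 _, h₅, h₆]

theorem apply_e₄_eq_zero_of_r3e' {eta : ℝ}
    {ω : CotangentAlg (R3e' eta) → CotangentAlg (R3e' eta) → ℝ} (hω : IsSymplForm ω) :
    ∀ v ∈ ({e₁ _, e₂ _, e₃ _, e₄ _, e₅ _, e₆ _} : Set (CotangentAlg (R3e' eta))),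
      ω (e₄ _) v = 0 := by
  have hz := hω.apply_lie_eq_zero_of_mem_center (e₄_mem_center (endOf eta 1 (-1) eta))
  have h₁₂ := hz (e₁ _) (e₂ _)
  have h₁₃ := hz (e₁ _) (e₃ _)
  have h₁₅ := hz (e₁ _) (e₅ _)
  have h₁₆ := hz (e₁ _) (e₆ _)
  simp only [lie_e₁_e₂, lie_e₁_e₃, lie_e₁_e₅, lie_e₁_e₆, one_smul, neg_smul, neg_neg, hω.add_right,
    hω.smul_right, hω.neg_right] at h₁₂ h₁₃ h₁₅ h₁₆
  obtain ⟨h₂, h₃⟩ := eq_zero_and_eq_zero_of_rotation (η := eta) (x := ω (e₄ _) (e₂ _))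
    (y := ω (e₄ _) (e₃ _)) (by linear_combination h₁₂) (by linear_combination h₁₃)
  obtain ⟨h₆, h₅⟩ := eq_zero_and_eq_zero_of_rotation (η := eta) (x := ω (e₄ _) (e₆ _))
    (y := ω (e₄ _) (e₅ _)) (by linear_combination -h₁₆) (by linear_combination -h₁₅)
  have h₁ : ω (e₄ _) (e₁ _) = 0 := by
    have h₁₃₅ := hω.apply_lie (e₁ _) (e₃ _) (e₅ _)
    have h₁₂₆ := hω.apply_lie (e₁ _) (e₂ _) (e₆ _)
    simp only [lie_e₁_e₂, lie_e₁_e₃, lie_e₁_e₅, lie_e₁_e₆, lie_e₃_e₅, lie_e₂_e₆, one_smul, neg_smul,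
      neg_neg, sub_neg_eq_add, hω.add_left, hω.smul_left, hω.neg_left] at h₁₃₅ h₁₂₆
    -- the cyclic sums on `(e₁, e₃, e₅)` and `(e₁, e₂, e₆)` differ by `2 ω(e₄, e₁)` up to skew terms
    linear_combination (h₁₃₅ - h₁₂₆ - hω.apply_swap (e₂ _) (e₅ _)
      - eta * hω.apply_swap (e₃ _) (e₅ _) - hω.apply_swap (e₃ _) (e₆ _)
      + eta * hω.apply_swap (e₂ _) (e₆ _)) / 2
  rintro v (rfl | rfl | rfl | rfl | rfl | rfl)
  exacts [h₁, h₂, h₃, hω.2.2.1 _, h₅, h₆]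

end CotangentSolv3

/-- The cotangent Lie algebras `T*r_{3,λ}` (`|λ| ≤ 1`) and `T*r'_{3,η}`
(`η ≥ 0`) carry no symplectic structure. -/
theorem cotangent_r3l_r3e_no_symplectic :
    (∀ lam : ℝ, |lam| ≤ 1 →
      ¬∃ ω : CotangentAlg (R3l lam) → CotangentAlg (R3l lam) → ℝ, IsSymplForm ω) ∧
    ∀ eta : ℝ, 0 ≤ eta →
      ¬∃ ω : CotangentAlg (R3e' eta) → CotangentAlg (R3e' eta) → ℝ, IsSymplForm ω := by
  constructor
  · rintro lam - ⟨ω, hω⟩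
    exact CotangentSolv3.e₄_ne_zero _ <| hω.eq_zero_of_apply_eq_zero_of_span_eq_top
      (CotangentSolv3.span_eq_top _) (CotangentSolv3.apply_e₄_eq_zero_of_r3l hω)
  · rintro eta - ⟨ω, hω⟩
    exact CotangentSolv3.e₄_ne_zero _ <| hω.eq_zero_of_apply_eq_zero_of_span_eq_top
      (CotangentSolv3.span_eq_top _) (CotangentSolv3.apply_e₄_eq_zero_of_r3e' hω)
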